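/- arXiv:1005.4492 — 3 statements merged into one kernel-verified Lean document; each statement's English description precedes it below -/
import Mathlib

section
/- Let D be a Steiner 2-design S(2,k,v) and G_1 its 1-block intersection graph, which is r-regular with r = k(v-k)/(k-1) and has b = v(v-1)/(k(k-1)) vertices. If the independence number α(G_1) satisfies α(G_1) > k · ⌊v(v-1)/(k^2·v - k^3 + k^2 - k)⌋, then G_1 is not silver. -/
open Finset

variable {α : Type*}

/-- A Steiner 2-design `S(2,k,v)`: the point set has `v` points, every block has
`k` points, and every pair of distinct points lies in exactly one block. -/
def IsSteiner [Fintype α] [DecidableEq α] (v k : ℕ) (B : Finset (Finset α)) : Prop :=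
  Fintype.card α = v ∧ (∀ b ∈ B, b.card = k) ∧
    ∀ x y : α, x ≠ y → (B.filter fun b => x ∈ b ∧ y ∈ b).card = 1

/-- The `i`-block intersection graph: vertices are the blocks of `B`, two blocks
adjacent iff they intersect in exactly `i` points. -/
def BIG [DecidableEq α] (i : ℕ) (B : Finset (Finset α)) :
    SimpleGraph {b : Finset α // b ∈ B} where
  Adj b₁ b₂ := b₁ ≠ b₂ ∧ ((b₁ : Finset α) ∩ (b₂ : Finset α)).card = i
  symm := ⟨fun a b ⟨h1, h2⟩ => ⟨h1.symm, by rwa [Finset.inter_comm]⟩⟩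
  loopless := ⟨fun a ⟨h, _⟩ => h rfl⟩

instance [DecidableEq α] (i : ℕ) (B : Finset (Finset α)) :
    DecidableRel (BIG (α := α) i B).Adj := fun _ _ => show Decidable (_ ∧ _) from instDecidableAnd

/-- `I` is a maximum independent set of `G`. -/
def IsMaxIndep {V : Type*} (G : SimpleGraph V) (I : Finset V) : Prop :=
  (∀ a ∈ I, ∀ b ∈ I, ¬ G.Adj a b) ∧
    ∀ J : Finset V, (∀ a ∈ J, ∀ b ∈ J, ¬ G.Adj a b) → J.card ≤ I.card

/-- A silver coloring of the `r`-regular graph `G` with respect to `I`: a proper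
`(r+1)`-coloring under which every vertex of `I` is rainbow (all `r+1` colors
appear on its closed neighborhood). -/
def SilverWith {V : Type*} (G : SimpleGraph V) (r : ℕ) (I : Finset V) : Prop :=
  ∃ c : V → Fin (r + 1), (∀ a b, G.Adj a b → c a ≠ c b) ∧
    ∀ x ∈ I, ∀ col : Fin (r + 1), ∃ y, (y = x ∨ G.Adj x y) ∧ c y = col

/-- `G` is silver: some silver coloring exists with respect to some maximum
independent set. -/
def IsSilver {V : Type*} (G : SimpleGraph V) (r : ℕ) : Prop :=
  ∃ I : Finset V, IsMaxIndep G I ∧ SilverWith G r I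

/-!
Each colour class of a silver colouring meets the closed neighbourhood of every vertex of `I`.
Since `I` is independent, its blocks are pairwise disjoint, so a block outside `I` meets them in
distinct points and has at most `k` neighbours in `I`. Double counting then gives
`|I| ≤ k · |class|`, and for the smallest colour class `|I| ≤ k · ⌊b / (r + 1)⌋`. Finally the
replication number `(v - 1) / (k - 1)` is an integer and `b · k(k - 1) = v(v - 1)`, which turn
`k(k - 1)(r + 1)` into `k²v - k³ + k² - k` and `⌊b / (r + 1)⌋` into the bound of the statement.
-/

theorem SilverWith.card_le_mul_card_div {V : Type*} [Fintype V] [DecidableEq V]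
    {G : SimpleGraph V} [DecidableRel G.Adj] {r k : ℕ} {I : Finset V} (hG : SilverWith G r I)
    (hI : ∀ y, #{x ∈ I | y = x ∨ G.Adj x y} ≤ k) : #I ≤ k * (Fintype.card V / (r + 1)) := by
  obtain ⟨c, -, hrainbow⟩ := hG
  obtain ⟨col, hcol⟩ := Fintype.exists_card_fiber_lt_of_card_lt_mul (f := c)
    (n := Fintype.card V / (r + 1) + 1) (by simpa using Nat.lt_mul_div_succ _ r.succ_pos)
  have hdom := card_mul_le_card_mul (fun x y => y = x ∨ G.Adj x y) (s := I)
    (t := {y | c y = col}) (m := 1) (n := k)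
    (fun x hx => by
      obtain ⟨y, hy, hcy⟩ := hrainbow x hx col
      exact one_le_card.mpr ⟨y, mem_filter.mpr ⟨mem_filter.mpr ⟨mem_univ _, hcy⟩, hy⟩⟩)
    (fun y _ => hI y)
  calc #I = #I * 1 := (mul_one _).symm
    _ ≤ #{y | c y = col} * k := hdom
    _ ≤ k * (Fintype.card V / (r + 1)) := by rw [mul_comm]; gcongr; omega

namespace IsSteiner

variable [Fintype α] [DecidableEq α] {v k : ℕ} {B : Finset (Finset α)}

theorem card_mul_eq (hD : IsSteiner v k B) : #B * (k * (k - 1)) = v * (v - 1) := by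
  obtain ⟨hv, hblock, hpair⟩ := hD
  have hcount := card_mul_eq_card_mul (fun (p : α × α) (b : Finset α) => p ∈ b.offDiag)
    (s := (univ : Finset α).offDiag) (t := B) (m := 1) (n := k * (k - 1))
    (fun p hp => by
      rw [← hpair p.1 p.2 (mem_offDiag.mp hp).2.2, bipartiteAbove]
      simp [mem_offDiag, (mem_offDiag.mp hp).2.2])
    (fun b hb => by
      rw [bipartiteBelow, filter_mem_eq_inter, inter_eq_right.mpr (offDiag_mono (subset_univ b)),
        offDiag_card, hblock b hb, Nat.mul_sub_one])
  rw [offDiag_card, card_univ, hv, ← Nat.mul_sub_one] at hcount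
  rw [← hcount, mul_one]

theorem card_filter_mem_mul_eq (hD : IsSteiner v k B) (x : α) :
    #{b ∈ B | x ∈ b} * (k - 1) = v - 1 := by
  obtain ⟨hv, hblock, hpair⟩ := hD
  have hcount := card_mul_eq_card_mul (fun (y : α) (b : Finset α) => y ∈ b)
    (s := univ.erase x) (t := {b ∈ B | x ∈ b}) (m := 1) (n := k - 1)
    (fun y hy => by
      rw [← hpair x y (ne_of_mem_erase hy).symm, bipartiteAbove, filter_filter])
    (fun b hb => by
      obtain ⟨hbB, hxb⟩ := mem_filter.mp hb
      rw [bipartiteBelow, filter_mem_eq_inter, erase_inter, univ_inter,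
        card_erase_of_mem hxb, hblock b hbB])
  rw [card_erase_of_mem (mem_univ x), card_univ, hv, mul_one] at hcount
  exact hcount.symm

theorem card_inter_le_one (hD : IsSteiner v k B) {b₁ b₂ : Finset α} (h₁ : b₁ ∈ B) (h₂ : b₂ ∈ B)
    (hne : b₁ ≠ b₂) : #(b₁ ∩ b₂) ≤ 1 := by
  by_contra! h
  obtain ⟨x, hx, y, hy, hxy⟩ := one_lt_card.mp h
  rw [mem_inter] at hx hy
  have : 1 < #{b ∈ B | x ∈ b ∧ y ∈ b} :=
    one_lt_card.mpr ⟨b₁, by simp [h₁, hx.1, hy.1], b₂, by simp [h₂, hx.2, hy.2], hne⟩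
  exact this.ne' (hD.2.2 x y hxy)

theorem disjoint_of_not_adj (hD : IsSteiner v k B) {a b : {b : Finset α // b ∈ B}} (hne : a ≠ b)
    (hab : ¬ (BIG 1 B).Adj a b) : Disjoint (a : Finset α) b := by
  have : #((a : Finset α) ∩ b) ≤ 1 := hD.card_inter_le_one a.2 b.2 (Subtype.coe_ne_coe.mpr hne)
  have : #((a : Finset α) ∩ b) ≠ 1 := fun h => hab ⟨hne, h⟩
  exact disjoint_iff_inter_eq_empty.mpr (card_eq_zero.mp (by omega))

theorem card_filter_closedNbhd_le (hD : IsSteiner v k B) (hk : 1 ≤ k)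
    {I : Finset {b : Finset α // b ∈ B}} (hI : ∀ a ∈ I, ∀ b ∈ I, ¬ (BIG 1 B).Adj a b)
    (y : {b : Finset α // b ∈ B}) : #{x ∈ I | y = x ∨ (BIG 1 B).Adj x y} ≤ k := by
  by_cases hy : y ∈ I
  · have : {x ∈ I | y = x ∨ (BIG 1 B).Adj x y} ⊆ {y} := fun x hx => by
      obtain ⟨hxI, rfl | hxy⟩ := mem_filter.mp hx
      · exact mem_singleton_self _
      · exact absurd hxy (hI x hxI y hy)
    exact (card_le_card this).trans (by rwa [card_singleton])
  set N := {x ∈ I | y = x ∨ (BIG 1 B).Adj x y}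
  have hadj : ∀ x ∈ N, (BIG 1 B).Adj x y := fun x hx => by
    obtain ⟨hxI, rfl | hxy⟩ := mem_filter.mp hx
    exacts [absurd hxI hy, hxy]
  have hdisj : (N : Set {b : Finset α // b ∈ B}).PairwiseDisjoint fun x => (x : Finset α) ∩ y :=
    fun x₁ h₁ x₂ h₂ hne => ((hD.disjoint_of_not_adj hne (hI x₁ (mem_filter.mp h₁).1 x₂
      (mem_filter.mp h₂).1)).mono inter_subset_left inter_subset_left)
  calc #N = ∑ x ∈ N, #((x : Finset α) ∩ y) := by
        rw [card_eq_sum_ones]; exact sum_congr rfl fun x hx => (hadj x hx).2.symm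
    _ = #(N.biUnion fun x => (x : Finset α) ∩ y) := (card_biUnion hdisj).symm
    _ ≤ #(y : Finset α) := card_le_card (biUnion_subset.mpr fun _ _ => inter_subset_right)
    _ = k := hD.2.1 y y.2

theorem card_div_eq (hD : IsSteiner v k B) (hk : 2 ≤ k) (hkv : k ≤ v) :
    #B / (k * (v - k) / (k - 1) + 1) = v * (v - 1) / (k ^ 2 * v - k ^ 3 + k ^ 2 - k) := by
  obtain ⟨x⟩ : Nonempty α := Fintype.card_pos_iff.mp (hD.1 ▸ by omega)
  have hrep := hD.card_filter_mem_mul_eq x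
  have hcount := hD.card_mul_eq
  obtain ⟨j, rfl⟩ : ∃ j, k = j + 2 := ⟨k - 2, by omega⟩
  rw [show j + 2 - 1 = j + 1 from rfl] at hrep hcount ⊢
  obtain ⟨S, hS⟩ : ∃ S, #{b ∈ B | x ∈ b} = S + 1 :=
    Nat.exists_eq_add_one.mpr (Nat.pos_of_ne_zero fun h => by rw [h, zero_mul] at hrep; omega)
  -- `S + 1` is the replication number, so `r = k * S`.
  have hv : v = (j + 1) * S + (j + 2) := by
    have : (S + 1) * (j + 1) = (j + 1) * S + (j + 1) := by ring
    rw [hS] at hrep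
    omega
  subst hv
  have hr : (j + 2) * ((j + 1) * S + (j + 2) - (j + 2)) / (j + 1) = (j + 2) * S := by
    rw [Nat.add_sub_cancel, mul_left_comm]
    exact Nat.mul_div_cancel_left _ j.succ_pos
  have hden : (j + 2) ^ 2 * ((j + 1) * S + (j + 2)) - (j + 2) ^ 3 + (j + 2) ^ 2 - (j + 2)
      = ((j + 2) * S + 1) * ((j + 2) * (j + 1)) := by
    have e1 : (j + 2) ^ 2 * ((j + 1) * S + (j + 2)) = (j + 2) ^ 2 * ((j + 1) * S) + (j + 2) ^ 3 := by
      ring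
    have e2 : (j + 2) ^ 2 = (j + 2) * (j + 1) + (j + 2) := by ring
    have e3 : ((j + 2) * S + 1) * ((j + 2) * (j + 1))
        = (j + 2) ^ 2 * ((j + 1) * S) + (j + 2) * (j + 1) := by ring
    omega
  rw [hr, hden, ← hcount, Nat.mul_div_mul_right _ _ (by positivity)]

end IsSteiner

/-- If the independence number of the 1-block intersection graph of an
`S(2,k,v)` exceeds `k·⌊v(v-1)/(k²v - k³ + k² - k)⌋`, then the graph is not
silver. -/
theorem stmt7 [Fintype α] [DecidableEq α] (v k : ℕ) (B : Finset (Finset α))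
    (hk : 2 < k) (hkv : k < v) (hD : IsSteiner v k B)
    (halpha : ∃ I : Finset {b : Finset α // b ∈ B},
      (∀ a ∈ I, ∀ b ∈ I, ¬ (BIG 1 B).Adj a b) ∧
      I.card > k * (v * (v - 1) / (k ^ 2 * v - k ^ 3 + k ^ 2 - k))) :
    ¬ IsSilver (BIG 1 B) (k * (v - k) / (k - 1)) := by
  rintro ⟨I, ⟨hIindep, hImax⟩, hsilver⟩
  obtain ⟨J, hJindep, hJcard⟩ := halpha
  have hbound := hsilver.card_le_mul_card_div (hD.card_filter_closedNbhd_le (by omega) hIindep)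
  rw [Fintype.card_coe, hD.card_div_eq hk.le hkv.le] at hbound
  have := hImax J hJindep
  omega
end

section
/- Let D be a Steiner 2-design S(2,k,v) with v > k^3 - 2k^2 + 2k, and let G_0 be its 0-block intersection graph (blocks adjacent iff disjoint). Then every maximum independent set of G_0 is of the form T(x) = {blocks containing x} for some point x, and consequently α(G_0) = (v-1)/(k-1). -/
open Finset

variable {α : Type*}

/-!
A maximum independent set `I` of the 0-block intersection graph is an intersecting family of
blocks with at least `r = (v - 1)/(k - 1)` members, the size of every `T(x)`. An intersecting
family without a common point has at most `k + (k - 1)²` blocks: if `b₁, b₂` meet in `p` and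
`c` misses `p`, a block through `p` is determined by its point on `c`, and a block missing `p`
by its points on `b₁ \ {p}` and `b₂ \ {p}`. The bound on `v` says exactly `r > k + (k - 1)²`,
so `I` has a common point `x`; then `I ⊆ T(x)`, and maximality gives `I = T(x)`.
-/

section BlockIntersectionGraph

variable [DecidableEq α] {B : Finset (Finset α)}

theorem BIG_zero_adj_iff {a b : {b : Finset α // b ∈ B}} :
    (BIG 0 B).Adj a b ↔ a ≠ b ∧ Disjoint a.1 b.1 := by
  rw [disjoint_iff_inter_eq_empty, ← card_eq_zero]
  rfl

theorem card_univ_filter_mem_val (B : Finset (Finset α)) (x : α) :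
    (univ.filter fun b : {b : Finset α // b ∈ B} => x ∈ b.1).card =
      (B.filter (x ∈ ·)).card := by
  rw [← card_map (Function.Embedding.subtype _)]
  congr 1
  ext b
  simp [and_comm]

theorem BIG_zero_indep_filter_mem (x : α) :
    ∀ a ∈ univ.filter (fun b : {b : Finset α // b ∈ B} => x ∈ b.1),
      ∀ b ∈ univ.filter (fun b : {b : Finset α // b ∈ B} => x ∈ b.1),
        ¬(BIG 0 B).Adj a b := by
  intro a ha b hb hab
  simp only [mem_filter, mem_univ, true_and] at ha hb
  exact not_disjoint_iff.mpr ⟨x, ha, hb⟩ (BIG_zero_adj_iff.mp hab).2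

theorem pairwise_not_disjoint_of_BIG_zero_indep {I : Finset {b : Finset α // b ∈ B}}
    (hI : ∀ a ∈ I, ∀ b ∈ I, ¬(BIG 0 B).Adj a b) :
    (I.map (Function.Embedding.subtype _) : Set (Finset α)).Pairwise (¬Disjoint · ·) := by
  simp only [coe_map, Function.Embedding.subtype_apply]
  rintro _ ⟨a, ha, rfl⟩ _ ⟨b, hb, rfl⟩ hne hdisj
  exact hI a ha b hb (BIG_zero_adj_iff.mpr ⟨fun h => hne (congrArg Subtype.val h), hdisj⟩)

end BlockIntersectionGraph

namespace IsSteiner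

variable [Fintype α] [DecidableEq α] {v k : ℕ} {B : Finset (Finset α)}

theorem eq_of_mem_of_mem (hD : IsSteiner v k B) {x y : α} (hxy : x ≠ y) {b c : Finset α}
    (hb : b ∈ B) (hc : c ∈ B) (hxb : x ∈ b) (hyb : y ∈ b) (hxc : x ∈ c) (hyc : y ∈ c) :
    b = c :=
  card_le_one.mp (hD.2.2 x y hxy).le b (by simp [hb, hxb, hyb]) c (by simp [hc, hxc, hyc])

theorem card_filter_mem_mul (hD : IsSteiner v k B) (x : α) :
    (B.filter (x ∈ ·)).card * (k - 1) = v - 1 := by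
  have h := card_mul_eq_card_mul (s := B.filter (x ∈ ·)) (t := univ.erase x)
    (fun b y => y ∈ b) (m := k - 1) (n := 1)
    (fun b hb => by
      rw [mem_filter] at hb
      have : (univ.erase x).filter (· ∈ b) = b.erase x := by ext; simp [and_comm]
      rw [bipartiteAbove, this, card_erase_of_mem hb.2, hD.2.1 b hb.1])
    (fun y hy => by
      rw [bipartiteBelow, filter_filter, ← hD.2.2 x y (ne_of_mem_erase hy).symm])
  rwa [mul_one, card_erase_of_mem (mem_univ x), card_univ, hD.1] at h

theorem card_filter_mem_eq_div (hD : IsSteiner v k B) (hk : 1 < k) (x : α) :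
    (B.filter (x ∈ ·)).card = (v - 1) / (k - 1) :=
  (Nat.div_eq_of_eq_mul_left (by omega) (hD.card_filter_mem_mul x).symm).symm

theorem card_filter_mem_le_of_notMem (hD : IsSteiner v k B) {S : Finset (Finset α)}
    (hSB : S ⊆ B) {c : Finset α} (hc : c ∈ B) {p : α} (hpc : p ∉ c)
    (hS : ∀ b ∈ S, p ∈ b → ¬Disjoint b c) :
    (S.filter (p ∈ ·)).card ≤ k := by
  rw [← hD.2.1 c hc]
  refine card_le_card_of_forall_subsingleton (fun b y => y ∈ b) (fun b hb => ?_) ?_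
  · rw [mem_filter] at hb
    obtain ⟨y, hyb, hyc⟩ := not_disjoint_iff.mp (hS b hb.1 hb.2)
    exact ⟨y, hyc, hyb⟩
  · intro y hyc b ⟨hb, hyb⟩ b' ⟨hb', hyb'⟩
    rw [mem_filter] at hb hb'
    exact hD.eq_of_mem_of_mem (ne_of_mem_of_not_mem hyc hpc).symm (hSB hb.1) (hSB hb'.1)
      hb.2 hyb hb'.2 hyb'

theorem card_filter_notMem_le (hD : IsSteiner v k B) {S : Finset (Finset α)} (hSB : S ⊆ B)
    {b₁ b₂ : Finset α} (hb₁ : b₁ ∈ B) (hb₂ : b₂ ∈ B) (hne : b₁ ≠ b₂) {p : α}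
    (hp₁ : p ∈ b₁) (hp₂ : p ∈ b₂)
    (hS : ∀ b ∈ S, p ∉ b → ¬Disjoint b b₁ ∧ ¬Disjoint b b₂) :
    (S.filter (p ∉ ·)).card ≤ (k - 1) * (k - 1) := by
  have hcard : ((b₁.erase p) ×ˢ (b₂.erase p)).card = (k - 1) * (k - 1) := by
    rw [card_product, card_erase_of_mem hp₁, card_erase_of_mem hp₂, hD.2.1 _ hb₁,
      hD.2.1 _ hb₂]
  rw [← hcard]
  refine card_le_card_of_forall_subsingleton (fun b yz => yz.1 ∈ b ∧ yz.2 ∈ b)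
    (fun b hb => ?_) ?_
  · rw [mem_filter] at hb
    obtain ⟨y, hyb, hy₁⟩ := not_disjoint_iff.mp (hS b hb.1 hb.2).1
    obtain ⟨z, hzb, hz₂⟩ := not_disjoint_iff.mp (hS b hb.1 hb.2).2
    exact ⟨(y, z), mem_product.mpr ⟨mem_erase.mpr ⟨ne_of_mem_of_not_mem hyb hb.2, hy₁⟩,
      mem_erase.mpr ⟨ne_of_mem_of_not_mem hzb hb.2, hz₂⟩⟩, hyb, hzb⟩
  · rintro ⟨y, z⟩ hyz b ⟨hb, hyb, hzb⟩ b' ⟨hb', hyb', hzb'⟩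
    simp only [mem_product, mem_erase] at hyz
    rw [mem_filter] at hb hb'
    -- `y ≠ z`, for otherwise `b₁` and `b₂` would share the two points `p` and `y`
    have hyz' : y ≠ z := by
      rintro rfl
      exact hne (hD.eq_of_mem_of_mem hyz.1.1 hb₁ hb₂ hyz.1.2 hp₁ hyz.2.2 hp₂)
    exact hD.eq_of_mem_of_mem hyz' (hSB hb.1) (hSB hb'.1) hyb hzb hyb' hzb'

theorem card_le_of_pairwise_not_disjoint (hD : IsSteiner v k B) {S : Finset (Finset α)}
    (hSB : S ⊆ B) (hS : (S : Set (Finset α)).Pairwise (¬Disjoint · ·)) (hS₁ : 1 < S.card)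
    (hnc : ∀ x, ∃ b ∈ S, x ∉ b) :
    S.card ≤ k + (k - 1) * (k - 1) := by
  obtain ⟨b₁, hb₁, b₂, hb₂, hne⟩ := one_lt_card.mp hS₁
  obtain ⟨p, hp₁, hp₂⟩ := not_disjoint_iff.mp (hS hb₁ hb₂ hne)
  obtain ⟨c, hc, hpc⟩ := hnc p
  have hmeet : ∀ b ∈ S, ∀ b' ∈ S, (p ∈ b ↔ p ∉ b') → ¬Disjoint b b' :=
    fun b hb b' hb' h => hS hb hb' fun heq => by subst heq; tauto
  rw [← card_filter_add_card_filter_not (p ∈ ·)]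
  exact add_le_add
    (hD.card_filter_mem_le_of_notMem hSB (hSB hc) hpc fun b hb hpb => hmeet b hb c hc (by tauto))
    (hD.card_filter_notMem_le hSB (hSB hb₁) (hSB hb₂) hne hp₁ hp₂ fun b hb hpb =>
      ⟨hmeet b hb b₁ hb₁ (by tauto), hmeet b hb b₂ hb₂ (by tauto)⟩)

theorem exists_eq_filter_mem_of_isMaxIndep (hD : IsSteiner v k B)
    (hv : (k - 1) * (k + (k - 1) * (k - 1)) < v - 1) {I : Finset {b : Finset α // b ∈ B}}
    (hI : IsMaxIndep (BIG 0 B) I) :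
    ∃ x : α, I = univ.filter fun b : {b : Finset α // b ∈ B} => x ∈ b.1 := by
  have hT : ∀ x, k + (k - 1) * (k - 1) < (B.filter (x ∈ ·)).card := fun x =>
    Nat.lt_of_mul_lt_mul_left (a := k - 1) <| by
      rwa [mul_comm (k - 1) (B.filter _).card, hD.card_filter_mem_mul x]
  obtain ⟨x₀⟩ : Nonempty α := Fintype.card_pos_iff.mp (by rw [hD.1]; omega)
  have hk : 1 < k := by
    by_contra hk
    have := hD.card_filter_mem_mul x₀
    rw [show k - 1 = 0 by omega, mul_zero] at this
    omega
  have hI₀ : k + (k - 1) * (k - 1) < I.card :=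
    (hT x₀).trans_le (card_univ_filter_mem_val B x₀ ▸ hI.2 _ (BIG_zero_indep_filter_mem x₀))
  obtain ⟨x, hx⟩ : ∃ x, ∀ b ∈ I, x ∈ b.1 := by
    by_contra! hnc
    have := hD.card_le_of_pairwise_not_disjoint (S := I.map (Function.Embedding.subtype _))
      (fun b hb => by obtain ⟨a, -, rfl⟩ := mem_map.mp hb; exact a.2)
      (pairwise_not_disjoint_of_BIG_zero_indep hI.1) (by rw [card_map]; omega) (by simpa using hnc)
    rw [card_map] at this
    omega
  refine ⟨x, eq_of_subset_of_card_le (fun b hb => by simpa using hx b hb) ?_⟩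
  exact hI.2 _ (BIG_zero_indep_filter_mem x)

end IsSteiner

theorem stmt8_general [Fintype α] [DecidableEq α] (v k : ℕ) (B : Finset (Finset α))
    (hk : 2 < k) (hD : IsSteiner v k B)
    (hv : v > k ^ 3 - 2 * k ^ 2 + 2 * k) :
    (∀ I : Finset {b : Finset α // b ∈ B}, IsMaxIndep (BIG 0 B) I →
      ∃ x : α, I = Finset.univ.filter fun b : {b : Finset α // b ∈ B} => x ∈ b.1) ∧
    ∀ I : Finset {b : Finset α // b ∈ B}, IsMaxIndep (BIG 0 B) I →
      I.card = (v - 1) / (k - 1) := by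
  -- `k³ - 2k² + 2k - 1 = (k - 1)(k + (k - 1)²)`: the replication number exceeds `k + (k - 1)²`
  have hr : (k - 1) * (k + (k - 1) * (k - 1)) < v - 1 := by
    obtain ⟨m, rfl⟩ : ∃ m, k = m + 1 := ⟨k - 1, by omega⟩
    have : (m + 1) ^ 3 + 2 * (m + 1) = 2 * (m + 1) ^ 2 + (m * (m + 1 + m * m) + 1) := by ring
    simp only [Nat.add_sub_cancel]
    omega
  have hT := fun I (hI : IsMaxIndep (BIG 0 B) I) => hD.exists_eq_filter_mem_of_isMaxIndep hr hI
  refine ⟨hT, fun I hI => ?_⟩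
  obtain ⟨x, rfl⟩ := hT I hI
  rw [card_univ_filter_mem_val, hD.card_filter_mem_eq_div (by omega)]

/-- For `v > k³ - 2k² + 2k`, every maximum independent set of the 0-block
intersection graph of an `S(2,k,v)` is `T(x)`, the set of blocks through some
point `x`; consequently the independence number is `(v-1)/(k-1)`. -/
theorem stmt8 [Fintype α] [DecidableEq α] (v k : ℕ) (B : Finset (Finset α))
    (hk : 2 < k) (hkv : k < v) (hD : IsSteiner v k B)
    (hv : v > k ^ 3 - 2 * k ^ 2 + 2 * k) :
    (∀ I : Finset {b : Finset α // b ∈ B}, IsMaxIndep (BIG 0 B) I →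
      ∃ x : α, I = Finset.univ.filter fun b : {b : Finset α // b ∈ B} => x ∈ b.1) ∧
    ∀ I : Finset {b : Finset α // b ∈ B}, IsMaxIndep (BIG 0 B) I →
      I.card = (v - 1) / (k - 1) :=
  stmt8_general v k B hk hD hv
end

section
/- Let D be a Steiner 2-design S(2,k,v) and let I be an independent set of the 0-block intersection graph G_0 (i.e., a set of pairwise intersecting blocks) that is not contained in T(x) for any point x. Then |I| ≤ k + (k-1)^2. -/
/-!
Fix a block `b₀ ∈ I`. Every other block of `I` meets `b₀`, so it passes through one of the `k`
points of `b₀`. For a point `a`, some block `b ∈ I` misses `a`, and each block of `I` through `a`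
meets `b` in a point `z`, the block being the only one through `a` and `z`; hence at most `k`
blocks of `I` pass through `a`, at most `k - 1` besides `b₀`. Thus `|I| ≤ 1 + k (k - 1)`,
which is `k + (k - 1)²`.
-/

open Finset

variable {α : Type*}

section LinearSpace

variable [DecidableEq α] {B I : Finset (Finset α)}
  (hpair : ∀ x y : α, x ≠ y → #(B.filter fun c => x ∈ c ∧ y ∈ c) ≤ 1) (hIB : I ⊆ B)
  (hint : ∀ b₁ ∈ I, ∀ b₂ ∈ I, b₁ ≠ b₂ → (b₁ ∩ b₂).Nonempty)
include hpair hIB hint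

theorem card_filter_mem_le_card_of_notMem {b : Finset α} (hb : b ∈ I) {y : α} (hy : y ∉ b) :
    #(I.filter (y ∈ ·)) ≤ #b := by
  have hcover : I.filter (y ∈ ·) ⊆ b.biUnion fun z => B.filter fun c => y ∈ c ∧ z ∈ c := by
    intro c hc
    obtain ⟨hcI, hyc⟩ := mem_filter.mp hc
    obtain ⟨z, hz⟩ := hint c hcI b hb (by rintro rfl; exact hy hyc)
    obtain ⟨hzc, hzb⟩ := mem_inter.mp hz
    exact mem_biUnion.mpr ⟨z, hzb, mem_filter.mpr ⟨hIB hcI, hyc, hzc⟩⟩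
  calc #(I.filter (y ∈ ·))
      ≤ #(b.biUnion fun z => B.filter fun c => y ∈ c ∧ z ∈ c) := card_le_card hcover
    _ ≤ #b * 1 := card_biUnion_le_card_mul _ _ _ fun z hz =>
        hpair y z (by rintro rfl; exact hy hz)
    _ = #b := mul_one _

theorem card_le_of_forall_exists_notMem {k : ℕ} (hcard : ∀ c ∈ I, #c ≤ k)
    (hnoT : ¬ ∃ x : α, ∀ b ∈ I, x ∈ b) :
    #I ≤ k * (k - 1) + 1 := by
  rcases I.eq_empty_or_nonempty with rfl | ⟨b₀, hb₀⟩
  · simp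
  push Not at hnoT
  have hfiber : ∀ a ∈ b₀, #((I.filter (a ∈ ·)).erase b₀) ≤ k - 1 := by
    intro a ha
    obtain ⟨b, hbI, hab⟩ := hnoT a
    rw [card_erase_of_mem (mem_filter.mpr ⟨hb₀, ha⟩)]
    have := card_filter_mem_le_card_of_notMem hpair hIB hint hbI hab
    have := hcard b hbI
    omega
  have hcover : I ⊆ insert b₀ (b₀.biUnion fun a => (I.filter (a ∈ ·)).erase b₀) := by
    intro c hc
    rcases eq_or_ne c b₀ with rfl | hne
    · exact mem_insert_self _ _
    obtain ⟨a, ha⟩ := hint c hc b₀ hb₀ hne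
    obtain ⟨hac, hab₀⟩ := mem_inter.mp ha
    exact mem_insert_of_mem
      (mem_biUnion.mpr ⟨a, hab₀, mem_erase.mpr ⟨hne, mem_filter.mpr ⟨hc, hac⟩⟩⟩)
  calc #I ≤ #(b₀.biUnion fun a => (I.filter (a ∈ ·)).erase b₀) + 1 :=
        (card_le_card hcover).trans (card_insert_le _ _)
    _ ≤ #b₀ * (k - 1) + 1 := by gcongr; exact card_biUnion_le_card_mul _ _ _ hfiber
    _ ≤ k * (k - 1) + 1 := by gcongr; exact hcard b₀ hb₀

end LinearSpace

theorem stmt9_general [Fintype α] [DecidableEq α] (v k : ℕ) (B : Finset (Finset α))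
    (hk : 2 < k) (hD : IsSteiner v k B)
    (I : Finset (Finset α)) (hIB : I ⊆ B)
    (hint : ∀ b₁ ∈ I, ∀ b₂ ∈ I, b₁ ≠ b₂ → (b₁ ∩ b₂).Nonempty)
    (hnoT : ¬ ∃ x : α, ∀ b ∈ I, x ∈ b) :
    I.card ≤ k + (k - 1) ^ 2 := by
  have hcard : ∀ c ∈ I, #c ≤ k := fun c hc => (hD.2.1 c (hIB hc)).le
  have hbound := card_le_of_forall_exists_notMem (fun x y hxy => (hD.2.2 x y hxy).le) hIB hint
    hcard hnoT
  obtain ⟨m, rfl⟩ : ∃ m, k = m + 1 := ⟨k - 1, by omega⟩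
  calc #I ≤ (m + 1) * m + 1 := by simpa using hbound
    _ = m + 1 + m ^ 2 := by ring
    _ = m + 1 + (m + 1 - 1) ^ 2 := by simp

/-- If `I` is a family of pairwise intersecting blocks of an `S(2,k,v)` (an
independent set of the 0-block intersection graph) having no common point, then
`|I| ≤ k + (k-1)²`. -/
theorem stmt9 [Fintype α] [DecidableEq α] (v k : ℕ) (B : Finset (Finset α))
    (hk : 2 < k) (hkv : k < v) (hD : IsSteiner v k B)
    (I : Finset (Finset α)) (hIB : I ⊆ B)
    (hint : ∀ b₁ ∈ I, ∀ b₂ ∈ I, b₁ ≠ b₂ → (b₁ ∩ b₂).Nonempty)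
    (hnoT : ¬ ∃ x : α, ∀ b ∈ I, x ∈ b) :
    I.card ≤ k + (k - 1) ^ 2 :=
  stmt9_general v k B hk hD I hIB hint hnoT
end
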